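/- Innermost lifting lemma: Let R be a rewrite system, s ∈ T(F,X), α a ground substitution such that αs is innermost-reducible at a non-variable position p of s, and Y ⊆ X a set of variables with Var(s) ∪ Dom(α) ⊆ Y. If αs rewrites innermost at position p with rule l→r to t', then there exist a term s' ∈ T(F,X) and substitutions β and σ = σ0 ∧ ⋀_{j=1..k} ¬σ_j such that: (1) s innermost-narrows to s' at position p with rule l→r and constrained substitution σ; (2) βs' = t'; (3) βσ0 = α on Y; and (4) β satisfies ⋀_{j=1..k} ¬σ_j; where σ0 is the most general unifier of s|_p and l and σ_1,…,σ_k are all most general unifiers of σ0(s|_{p'}) with a left-hand side of a rule of R, for all positions p' of s that are strict suffixes of p. -/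

import Mathlib

namespace TRS

inductive Term (F V : Type*) where
  | var : V → Term F V
  | app : F → List (Term F V) → Term F V

namespace Term

variable {F V : Type*}

mutual
  def subst (σ : V → Term F V) : Term F V → Term F V
    | .var x => σ x
    | .app f ts => .app f (substList σ ts)

  def substList (σ : V → Term F V) : List (Term F V) → List (Term F V)
    | [] => []
    | t :: ts => subst σ t :: substList σ ts
end

mutual
  def vars : Term F V → Set V
    | .var x => {x}
    | .app _ ts => varsList ts

  def varsList : List (Term F V) → Set V
    | [] => ∅
    | t :: ts => vars t ∪ varsList ts
end

def IsGround (t : Term F V) : Prop := vars t = ∅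

def top : Term F V → Option F
  | .var _ => none
  | .app f _ => some f

def subtermAt : List ℕ → Term F V → Option (Term F V)
  | [], t => some t
  | _ :: _, .var _ => none
  | i :: p, .app _ ts =>
    match ts[i]? with
    | none => none
    | some u => subtermAt p u

def replaceAt : List ℕ → Term F V → Term F V → Option (Term F V)
  | [], _, u => some u
  | _ :: _, .var _, _ => none
  | i :: p, .app f ts, u =>
    match ts[i]? with
    | none => none
    | some ti =>
      match replaceAt p ti u with
      | none => none
      | some ti' => some (.app f (ts.set i ti'))

inductive WF (arity : F → ℕ) : Term F V → Prop
  | var (x : V) : WF arity (.var x)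
  | app (f : F) (ts : List (Term F V)) :
      ts.length = arity f → (∀ t ∈ ts, WF arity t) → WF arity (.app f ts)

inductive Occurs (f : F) : Term F V → Prop
  | head (ts : List (Term F V)) : Occurs f (.app f ts)
  | arg {g : F} {ts : List (Term F V)} {t : Term F V} :
      t ∈ ts → Occurs f t → Occurs f (.app g ts)

end Term

open Term

structure Rule (F V : Type*) where
  lhs : Term F V
  rhs : Term F V

variable {F V : Type*}

/-- The domain of a substitution. -/
def SDom (σ : V → Term F V) : Set V := {x | σ x ≠ Term.var x}

/-- The range (variables) of a substitution. -/
def SRan (σ : V → Term F V) : Set V := ⋃ x ∈ SDom σ, vars (σ x)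

/-- A ground substitution maps every variable of its domain to a ground term. -/
def GroundSubst (σ : V → Term F V) : Prop := ∀ x ∈ SDom σ, IsGround (σ x)

/-- `R` is a rewrite system: no left-hand side is a variable, and
`Var(rhs) ⊆ Var(lhs)` for every rule. -/
def IsRS (R : List (Rule F V)) : Prop :=
  ∀ ρ ∈ R, (∀ x : V, ρ.lhs ≠ Term.var x) ∧ vars ρ.rhs ⊆ vars ρ.lhs

/-- Rewriting at position `p` with the rule `l → r`. -/
def RewriteAtWith (l r : Term F V) (p : List ℕ) (s t : Term F V) : Prop :=
  ∃ τ : V → Term F V, subtermAt p s = some (subst τ l) ∧ replaceAt p s (subst τ r) = some t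

/-- Rewriting at position `p` with some rule of `R`. -/
def RewriteAt (R : List (Rule F V)) (p : List ℕ) (s t : Term F V) : Prop :=
  ∃ ρ ∈ R, RewriteAtWith ρ.lhs ρ.rhs p s t

/-- The rewriting relation induced by `R`. -/
def Rewrite (R : List (Rule F V)) (s t : Term F V) : Prop :=
  ∃ p, RewriteAt R p s t

def ReducibleAt (R : List (Rule F V)) (s : Term F V) (p : List ℕ) : Prop :=
  ∃ t, RewriteAt R p s t

def Reducible (R : List (Rule F V)) (s : Term F V) : Prop :=
  ∃ t, Rewrite R s t

def NormalForm (R : List (Rule F V)) (s : Term F V) : Prop := ¬ Reducible R s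

/-- `n` is a normal form of `s`. -/
def IsNormalFormOf (R : List (Rule F V)) (s n : Term F V) : Prop :=
  Relation.ReflTransGen (Rewrite R) s n ∧ NormalForm R n

/-- `q` is strictly below `p` (`p` is a strict prefix of `q`). -/
def StrictBelow (p q : List ℕ) : Prop := p <+: q ∧ p ≠ q

/-- Innermost rewrite step at position `p`. -/
def InnAt (R : List (Rule F V)) (p : List ℕ) (s t : Term F V) : Prop :=
  RewriteAt R p s t ∧ ∀ q, StrictBelow p q → ¬ ReducibleAt R s q

def InnStep (R : List (Rule F V)) (s t : Term F V) : Prop := ∃ p, InnAt R p s t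

/-- Outermost rewrite step at position `p`. -/
def OutAt (R : List (Rule F V)) (p : List ℕ) (s t : Term F V) : Prop :=
  RewriteAt R p s t ∧ ∀ q, StrictBelow q p → ¬ ReducibleAt R s q

def OutStep (R : List (Rule F V)) (s t : Term F V) : Prop := ∃ p, OutAt R p s t

/-- Innermost rewrite step at position `p` with rule `l → r`. -/
def InnAtWith (R : List (Rule F V)) (l r : Term F V) (p : List ℕ) (s t : Term F V) : Prop :=
  RewriteAtWith l r p s t ∧ ∀ q, StrictBelow p q → ¬ ReducibleAt R s q

/-- Outermost rewrite step at position `p` with rule `l → r`. -/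
def OutAtWith (R : List (Rule F V)) (l r : Term F V) (p : List ℕ) (s t : Term F V) : Prop :=
  RewriteAtWith l r p s t ∧ ∀ q, StrictBelow q p → ¬ ReducibleAt R s q

/-- No infinite innermost derivation starts from `t`. -/
def InnTerminates (R : List (Rule F V)) (t : Term F V) : Prop :=
  ¬ ∃ f : ℕ → Term F V, f 0 = t ∧ ∀ n, InnStep R (f n) (f (n + 1))

/-- No infinite outermost derivation starts from `t`. -/
def OutTerminates (R : List (Rule F V)) (t : Term F V) : Prop :=
  ¬ ∃ f : ℕ → Term F V, f 0 = t ∧ ∀ n, OutStep R (f n) (f (n + 1))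

def Unifies (σ : V → Term F V) (u v : Term F V) : Prop := subst σ u = subst σ v

/-- `σ` is a most general unifier of `u` and `v`. -/
def IsMGU (u v : Term F V) (σ : V → Term F V) : Prop :=
  Unifies σ u v ∧
    ∀ τ : V → Term F V, Unifies τ u v → ∃ ρ : V → Term F V, ∀ x, subst ρ (σ x) = τ x

/-- The usable rules of a term (least set closed under the defining equations). -/
inductive Usable (R : List (Rule F V)) (XA : Set V) : Term F V → Rule F V → Prop
  | var {x : V} {ρ : Rule F V} : x ∉ XA → ρ ∈ R → Usable R XA (Term.var x) ρ
  | rls {f : F} {ts : List (Term F V)} {ρ : Rule F V} :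
      ρ ∈ R → Term.top ρ.lhs = some f → Usable R XA (Term.app f ts) ρ
  | arg {f : F} {ts : List (Term F V)} {t : Term F V} {ρ : Rule F V} :
      t ∈ ts → Usable R XA t ρ → Usable R XA (Term.app f ts) ρ
  | rhs {f : F} {ts : List (Term F V)} {ρ' ρ : Rule F V} :
      ρ' ∈ R → Term.top ρ'.lhs = some f → Usable R XA ρ'.rhs ρ → Usable R XA (Term.app f ts) ρ

/-!
Since the variables of `l` avoid `Y`, the restriction of `α` to `Y` and the matcher `τ` of the
rewrite step glue to one substitution `μ` unifying `s|_p` with `l`. Unifiable terms have a most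
general unifier `σ₀` (by the usual recursion on the size of the common instance), so `μ = βσ₀`,
and `β` maps the narrowed term `σ₀(s[r]_p)` to `α(s)[τr]_p = t'`. If `β` satisfied all equations
of some `σ_j`, it would unify `σ₀(s|_{p'})` with a renamed left-hand side, making
`βσ₀(s|_{p'}) = α(s|_{p'})` a redex strictly below `p` in `αs`, against innermostness.
-/

namespace Term

mutual
theorem subst_subst (ρ σ : V → Term F V) : (t : Term F V) →
    subst ρ (subst σ t) = subst (fun x => subst ρ (σ x)) t
  | .var _ => rfl
  | .app f ts => by simp only [subst, substList_subst ρ σ ts]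

theorem substList_subst (ρ σ : V → Term F V) : (ts : List (Term F V)) →
    substList ρ (substList σ ts) = substList (fun x => subst ρ (σ x)) ts
  | [] => rfl
  | t :: ts => by simp only [substList, subst_subst ρ σ t, substList_subst ρ σ ts]
end

mutual
theorem subst_congr {σ τ : V → Term F V} : (t : Term F V) →
    (∀ x ∈ vars t, σ x = τ x) → subst σ t = subst τ t
  | .var x, h => h x rfl
  | .app f ts, h => by simp only [subst, substList_congr ts h]

theorem substList_congr {σ τ : V → Term F V} : (ts : List (Term F V)) →
    (∀ x ∈ varsList ts, σ x = τ x) → substList σ ts = substList τ ts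
  | [], _ => rfl
  | t :: ts, h => by
    simp only [substList, subst_congr t (fun x hx => h x (Or.inl hx)),
      substList_congr ts (fun x hx => h x (Or.inr hx))]
end

mutual
theorem subst_var : (t : Term F V) → subst Term.var t = t
  | .var _ => rfl
  | .app f ts => by simp only [subst, substList_var ts]

theorem substList_var : (ts : List (Term F V)) → substList Term.var ts = ts
  | [] => rfl
  | t :: ts => by simp only [substList, subst_var t, substList_var ts]
end

theorem subst_subst_of_comp {ρ σ τ : V → Term F V} (h : ∀ x, subst ρ (σ x) = τ x)
    (t : Term F V) : subst ρ (subst σ t) = subst τ t := by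
  rw [subst_subst, funext h]

theorem substList_eq_map (σ : V → Term F V) (ts : List (Term F V)) :
    substList σ ts = ts.map (subst σ) := by
  induction ts with
  | nil => rfl
  | cons t ts ih => simp [substList, ih]

theorem vars_subset_varsList {t : Term F V} {ts : List (Term F V)} (h : t ∈ ts) :
    vars t ⊆ varsList ts := by
  induction ts with
  | nil => simp at h
  | cons a ts ih =>
    rcases List.mem_cons.mp h with rfl | h
    · exact Set.subset_union_left
    · exact (ih h).trans Set.subset_union_right

theorem subst_piecewise_of_subset (Y : Set V) [DecidablePred (· ∈ Y)] (σ τ : V → Term F V)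
    {t : Term F V} (h : vars t ⊆ Y) : subst (Y.piecewise σ τ) t = subst σ t :=
  subst_congr t fun _ hx => Y.piecewise_eq_of_mem _ _ (h hx)

theorem subst_piecewise_of_disjoint (Y : Set V) [DecidablePred (· ∈ Y)] (σ τ : V → Term F V)
    {t : Term F V} (h : ∀ x ∈ vars t, x ∉ Y) : subst (Y.piecewise σ τ) t = subst τ t :=
  subst_congr t fun x hx => Y.piecewise_eq_of_notMem _ _ (h x hx)

mutual
def size : Term F V → ℕ
  | .var _ => 1
  | .app _ ts => 1 + sizeList ts

def sizeList : List (Term F V) → ℕ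
  | [] => 0
  | t :: ts => size t + sizeList ts
end

theorem size_pos : (t : Term F V) → 0 < size t
  | .var _ => Nat.one_pos
  | .app _ _ => by simp [size]

mutual
theorem size_le_size_subst (μ : V → Term F V) {x : V} : (t : Term F V) →
    x ∈ vars t → size (μ x) ≤ size (subst μ t)
  | .var _, rfl => le_rfl
  | .app _ ts, h => by
    have := sizeList_le_sizeList_substList μ ts h
    simp only [subst, size]
    omega

theorem sizeList_le_sizeList_substList (μ : V → Term F V) {x : V} : (ts : List (Term F V)) →
    x ∈ varsList ts → size (μ x) ≤ sizeList (substList μ ts)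
  | t :: ts, h => by
    simp only [substList, sizeList]
    rcases h with h | h
    · have := size_le_size_subst μ t h
      omega
    · have := sizeList_le_sizeList_substList μ ts h
      omega
end

theorem size_lt_size_subst (μ : V → Term F V) {x : V} {t : Term F V}
    (hx : x ∈ vars t) (ht : t ≠ .var x) : size (μ x) < size (subst μ t) := by
  cases t with
  | var y => exact absurd (congrArg Term.var hx).symm ht
  | app f ts =>
    have := sizeList_le_sizeList_substList μ ts hx
    simp only [subst, size]
    omega

theorem size_subst_app_cons (μ : V → Term F V) (f : F) (t : Term F V) (ts : List (Term F V)) :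
    size (subst μ (.app f (t :: ts))) = size (subst μ t) + size (subst μ (.app f ts)) := by
  simp only [subst, substList, size, sizeList]
  omega

theorem subtermAt_subst (σ : V → Term F V) :
    ∀ {p : List ℕ} {s u : Term F V}, subtermAt p s = some u →
      subtermAt p (subst σ s) = some (subst σ u)
  | [], _, _, h => by cases h; rfl
  | _ :: _, .var _, _, h => nomatch h
  | i :: p, .app f ts, u, h => by
    simp only [subtermAt] at h
    cases hti : ts[i]? with
    | none => simp [hti] at h
    | some ti =>
      rw [hti] at h
      simp only [subst, substList_eq_map, subtermAt, List.getElem?_map, hti, Option.map_some]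
      exact subtermAt_subst σ h

theorem vars_subset_of_subtermAt :
    ∀ {p : List ℕ} {s u : Term F V}, subtermAt p s = some u → vars u ⊆ vars s
  | [], _, _, h => by cases h; rfl
  | _ :: _, .var _, _, h => nomatch h
  | i :: p, .app f ts, u, h => by
    simp only [subtermAt] at h
    cases hti : ts[i]? with
    | none => simp [hti] at h
    | some ti =>
      rw [hti] at h
      exact (vars_subset_of_subtermAt h).trans (vars_subset_varsList (List.mem_of_getElem? hti))

theorem exists_replaceAt_of_subtermAt :
    ∀ {p : List ℕ} {s u : Term F V}, subtermAt p s = some u → ∀ v, ∃ w, replaceAt p s v = some w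
  | [], _, _, _, v => ⟨v, rfl⟩
  | _ :: _, .var _, _, h, _ => nomatch h
  | i :: p, .app f ts, u, h, v => by
    simp only [subtermAt] at h
    cases hti : ts[i]? with
    | none => simp [hti] at h
    | some ti =>
      rw [hti] at h
      obtain ⟨w, hw⟩ := exists_replaceAt_of_subtermAt h v
      exact ⟨.app f (ts.set i w), by simp only [replaceAt, hti, hw]⟩

theorem replaceAt_subst (σ : V → Term F V) :
    ∀ {p : List ℕ} {s v w : Term F V}, replaceAt p s v = some w →
      replaceAt p (subst σ s) (subst σ v) = some (subst σ w)
  | [], _, _, _, h => by cases h; rfl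
  | _ :: _, .var _, _, _, h => nomatch h
  | i :: p, .app f ts, v, w, h => by
    simp only [replaceAt] at h
    cases hti : ts[i]? with
    | none => simp [hti] at h
    | some ti =>
      cases hri : replaceAt p ti v with
      | none => simp [hti, hri] at h
      | some ti' =>
        simp only [hti, hri, Option.some.injEq] at h
        subst h
        simp only [subst, substList_eq_map, replaceAt, List.getElem?_map, hti, Option.map_some,
          replaceAt_subst σ hri, List.map_set]

end Term

open Term

theorem reducibleAt_of_subtermAt_eq_subst {R : List (Rule F V)} {ρ : Rule F V} (hρ : ρ ∈ R)
    {t : Term F V} {q : List ℕ} {θ : V → Term F V}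
    (h : subtermAt q t = some (subst θ ρ.lhs)) : ReducibleAt R t q :=
  let ⟨w, hw⟩ := exists_replaceAt_of_subtermAt h (subst θ ρ.rhs)
  ⟨w, ρ, hρ, θ, h, hw⟩

theorem Unifies.symm {σ : V → Term F V} {u v : Term F V} (h : Unifies σ u v) : Unifies σ v u :=
  Eq.symm h

theorem unifies_comp_iff {ρ σ : V → Term F V} {u v : Term F V} :
    Unifies (fun x => subst ρ (σ x)) u v ↔ Unifies ρ (subst σ u) (subst σ v) := by
  simp only [Unifies, subst_subst]

theorem Unifies.of_comp_eq {β ν : V → Term F V} {u v : Term F V} (hν : Unifies ν u v)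
    (hβ : ∀ x, subst β (ν x) = β x) : Unifies β u v :=
  calc subst β u = subst β (subst ν u) := (subst_subst_of_comp hβ u).symm
    _ = subst β (subst ν v) := congrArg (subst β) hν
    _ = subst β v := subst_subst_of_comp hβ v

theorem unifies_app_cons_iff {σ : V → Term F V} {f : F} {t u : Term F V}
    {ts us : List (Term F V)} :
    Unifies σ (.app f (t :: ts)) (.app f (u :: us)) ↔
      Unifies σ t u ∧ Unifies σ (.app f ts) (.app f us) := by
  simp only [Unifies, subst, substList, Term.app.injEq, List.cons.injEq, true_and]

theorem IsMGU.symm {u v : Term F V} {σ : V → Term F V} (h : IsMGU u v σ) : IsMGU v u σ :=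
  ⟨h.1.symm, fun τ hτ => h.2 τ hτ.symm⟩

theorem isMGU_refl (t : Term F V) : IsMGU t t Term.var :=
  ⟨rfl, fun τ _ => ⟨τ, fun _ => rfl⟩⟩

theorem isMGU_var_of_notMem [DecidableEq V] {x : V} {v : Term F V} (hx : x ∉ vars v) :
    IsMGU (.var x) v (Function.update Term.var x v) := by
  have hv : subst (Function.update Term.var x v) v = v := by
    conv_rhs => rw [← subst_var v]
    exact subst_congr v fun y hy => Function.update_of_ne (ne_of_mem_of_not_mem hy hx) _ _
  refine ⟨by rw [Unifies, hv]; exact Function.update_self .., fun τ hτ => ⟨τ, fun y => ?_⟩⟩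
  by_cases hy : y = x
  · subst hy
    rw [Function.update_self]
    exact hτ.symm
  · rw [Function.update_of_ne hy]
    rfl

theorem exists_isMGU_var {μ : V → Term F V} {x : V} {v : Term F V} (h : Unifies μ (.var x) v) :
    ∃ σ, IsMGU (.var x) v σ := by
  classical
  by_cases hv : v = .var x
  · exact hv ▸ ⟨_, isMGU_refl _⟩
  · -- occurs check: `x ∈ vars v` would make `μ x` a proper subterm of `μ v`
    refine ⟨_, isMGU_var_of_notMem fun hx => ?_⟩
    exact (size_lt_size_subst μ hx hv).ne (congrArg size h)

theorem IsMGU.app_cons {σ₁ σ₂ : V → Term F V} {f : F} {t u : Term F V}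
    {ts us : List (Term F V)} (h₁ : IsMGU t u σ₁)
    (h₂ : IsMGU (subst σ₁ (.app f ts)) (subst σ₁ (.app f us)) σ₂) :
    IsMGU (.app f (t :: ts)) (.app f (u :: us)) (fun x => subst σ₂ (σ₁ x)) := by
  refine ⟨unifies_app_cons_iff.mpr ⟨?_, unifies_comp_iff.mpr h₂.1⟩, fun τ hτ => ?_⟩
  · exact unifies_comp_iff.mpr (congrArg (subst σ₂) h₁.1)
  obtain ⟨hτ₁, hτ₂⟩ := unifies_app_cons_iff.mp hτ
  obtain ⟨ρ, hρ⟩ := h₁.2 τ hτ₁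
  obtain ⟨ρ₂, hρ₂⟩ := h₂.2 ρ (unifies_comp_iff.mp (funext hρ ▸ hτ₂))
  exact ⟨ρ₂, fun x => (subst_subst_of_comp hρ₂ (σ₁ x)).trans (hρ x)⟩

theorem exists_isMGU {μ : V → Term F V} {u v : Term F V} (h : Unifies μ u v) :
    ∃ σ, IsMGU u v σ := by
  induction hn : size (subst μ u) using Nat.strong_induction_on generalizing u v μ with
  | _ n ih =>
  cases u with
  | var x => exact exists_isMGU_var h
  | app f ts =>
  cases v with
  | var y => exact (exists_isMGU_var h.symm).imp fun _ => IsMGU.symm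
  | app g us =>
  obtain ⟨rfl, hts⟩ : f = g ∧ substList μ ts = substList μ us := by
    simpa only [Unifies, subst, Term.app.injEq] using h
  cases ts with
  | nil => cases us with
    | nil => exact ⟨_, isMGU_refl _⟩
    | cons => nomatch hts
  | cons t ts => cases us with
    | nil => nomatch hts
    | cons u us =>
    obtain ⟨h₁, h₂⟩ := unifies_app_cons_iff.mp h
    have hsize := size_subst_app_cons μ f t ts
    have := size_pos (subst μ (.app f ts))
    have := size_pos (subst μ t)
    obtain ⟨σ₁, hσ₁⟩ := ih _ (by omega) h₁ rfl
    obtain ⟨ρ, hρ⟩ := hσ₁.2 μ h₁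
    have h₂' : Unifies ρ (subst σ₁ (.app f ts)) (subst σ₁ (.app f us)) :=
      unifies_comp_iff.mp (funext hρ ▸ h₂)
    -- the common instance `ρ (σ₁ (f ts)) = μ (f ts)` of the second subproblem is smaller
    obtain ⟨σ₂, hσ₂⟩ := ih _ (by rw [subst_subst_of_comp hρ]; omega) h₂' rfl
    exact ⟨_, hσ₁.app_cons hσ₂⟩

theorem exists_ne_subst_of_not_reducibleAt {R : List (Rule F V)} {ρ : Rule F V} (hρ : ρ ∈ R)
    {t u : Term F V} {q : List ℕ} {β ν θ : V → Term F V}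
    (hsub : subtermAt q t = some (subst β u)) (hν : Unifies ν u (subst θ ρ.lhs))
    (hirr : ¬ ReducibleAt R t q) : ∃ x, β x ≠ subst β (ν x) := by
  by_contra! hβ
  have hu : subst β u = subst (fun x => subst β (θ x)) ρ.lhs := by
    rw [hν.of_comp_eq fun x => (hβ x).symm, subst_subst]
  exact hirr (reducibleAt_of_subtermAt_eq_subst hρ (hu ▸ hsub))

/-- innermost lifting lemma.
If `αs` rewrites innermost at the non-variable position `p` of `s` with rule `l→r` to `t'`,
then `s` innermost-narrows at `p` with `l→r` and a constrained substitution
`σ = σ₀ ∧ ⋀_j ¬σ_j` into some `s'`, and there is a `β` with `βs' = t'`, `βσ₀ = α` on `Y`,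
and `β` satisfies every `¬σ_j`, where the `σ_j` range over all most general unifiers of
`σ₀(s|_{p'})` with a (renamed, variable-disjoint) left-hand side of a rule of `R`,
for all positions `p'` of `s` that are strict suffixes of `p`. -/
theorem innermost_lifting {F V : Type*}
    (R : List (Rule F V)) (hRS : IsRS R)
    (s : Term F V) (α : V → Term F V) (hα : GroundSubst α)
    (Y : Set V) (hYs : vars s ⊆ Y) (hYd : SDom α ⊆ Y)
    -- the variables of the rules are renamed away from `Y`
    (hYR : ∀ ρ ∈ R, ∀ x ∈ vars ρ.lhs, x ∉ Y)
    (l r : Term F V) (hrule : (⟨l, r⟩ : Rule F V) ∈ R)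
    (p : List ℕ) (sp : Term F V)
    (hsp : subtermAt p s = some sp) (hnv : ∀ x : V, sp ≠ Term.var x)
    (t' : Term F V)
    -- `αs` rewrites innermost at position `p` with rule `l→r` to `t'`
    (hstep : RewriteAtWith l r p (subst α s) t')
    (hinn : ∀ q, StrictBelow p q → ¬ ReducibleAt R (subst α s) q) :
    ∃ (s' : Term F V) (β σ0 : V → Term F V),
      -- (1) `s` innermost-narrows to `s'` at `p` with rule `l→r` and mgu `σ₀`
      (IsMGU sp l σ0 ∧ ∃ w, replaceAt p s r = some w ∧ s' = subst σ0 w) ∧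
      -- (2) `βs' = t'`
      subst β s' = t' ∧
      -- (3) `βσ₀ = α` on `Y`
      (∀ x ∈ Y, subst β (σ0 x) = α x) ∧
      -- (4) `β` satisfies `¬σ_j` for every mgu `σ_j` of `σ₀(s|_{p'})` with a renamed
      -- left-hand side of a rule of `R`, `p'` a strict suffix position of `p` in `s`
      (∀ p' : List ℕ, StrictBelow p p' → ∀ sp', subtermAt p' s = some sp' →
        ∀ ρ' ∈ R, ∀ ξ : V → V, Function.Injective ξ →
          (∀ x ∈ vars (subst (fun y => Term.var (ξ y)) ρ'.lhs),
              x ∉ Y ∧ x ∉ vars (subst σ0 sp')) →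
          ∀ ν : V → Term F V,
            IsMGU (subst σ0 sp') (subst (fun y => Term.var (ξ y)) ρ'.lhs) ν →
            ∃ x : V, β x ≠ subst β (ν x)) := by
  classical
  obtain ⟨τ, hτl, hτr⟩ := hstep
  -- `μ` unifies `s|_p` with `l` because the variables of `l` lie outside `Y`
  set μ := Y.piecewise α τ
  have hμs : subst μ s = subst α s := subst_piecewise_of_subset Y α τ hYs
  have hμ_sub {q u} (hq : subtermAt q s = some u) : subst μ u = subst α u :=
    subst_piecewise_of_subset Y α τ ((vars_subset_of_subtermAt hq).trans hYs)
  have hμl : subst μ l = subst τ l := subst_piecewise_of_disjoint Y α τ (hYR _ hrule)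
  have hμr : subst μ r = subst τ r :=
    subst_piecewise_of_disjoint Y α τ fun x hx => hYR _ hrule x ((hRS _ hrule).2 hx)
  have hunif : Unifies μ sp l := by
    rw [Unifies, hμl, hμ_sub hsp]
    exact Option.some.inj ((subtermAt_subst α hsp).symm.trans hτl)
  obtain ⟨σ0, hσ0⟩ := exists_isMGU hunif
  obtain ⟨β, hβ⟩ := hσ0.2 μ hunif
  obtain ⟨w, hw⟩ := exists_replaceAt_of_subtermAt hsp r
  refine ⟨subst σ0 w, β, σ0, ⟨hσ0, w, hw, rfl⟩, ?_, fun x hx => (hβ x).trans (Y.piecewise_eq_of_mem _ _ hx), ?_⟩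
  · have hrep := replaceAt_subst μ hw
    rw [hμs, hμr, hτr, Option.some.injEq] at hrep
    rw [subst_subst_of_comp hβ, hrep]
  · intro p' hp' sp' hsp' ρ' hρ' _ _ _ ν hν
    refine exists_ne_subst_of_not_reducibleAt hρ' ?_ hν.1 (hinn p' hp')
    rw [subst_subst_of_comp hβ, hμ_sub hsp']
    exact subtermAt_subst α hsp'

end TRS
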